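/- Let A be a pseudo-hoop and μ a state operator of type I, II, or III on A. Then: μ(1) = 1; μ is order-preserving; μ∘μ = μ; μ(x→y) ≤ μ(x)→μ(y) and μ(x⇝y) ≤ μ(x)⇝μ(y); Ker(μ) = {x : μ(x) = 1} is a filter of A; Im(μ) = {x : μ(x) = x}; and Ker(μ) ∩ Im(μ) = {1}. -/

import Mathlib

universe u v

class PseudoHoop (A : Type u) extends One A, Mul A where
  rimp : A → A → A
  limp : A → A → A
  mul_one' : ∀ x : A, x * 1 = x
  one_mul' : ∀ x : A, 1 * x = x
  rimp_self : ∀ x : A, rimp x x = 1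
  limp_self : ∀ x : A, limp x x = 1
  mul_rimp : ∀ x y z : A, rimp (x * y) z = rimp x (rimp y z)
  mul_limp : ∀ x y z : A, limp (x * y) z = limp y (limp x z)
  div₁ : ∀ x y : A, (rimp x y) * x = (rimp y x) * y
  div₂ : ∀ x y : A, (rimp x y) * x = x * (limp x y)
  div₃ : ∀ x y : A, x * (limp x y) = y * (limp y x)

namespace PseudoHoop

/-- The order on a pseudo-hoop: `x ≤ y` iff `x → y = 1`. -/
def ple {A : Type u} [PseudoHoop A] (x y : A) : Prop := rimp x y = 1

/-- The meet `x ∧ y = (x → y) ⊙ x`. -/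
def meet {A : Type u} [PseudoHoop A] (x y : A) : A := (rimp x y) * x

/-- `x ∨₁ y = (x → y) ⇝ y`. -/
def join₁ {A : Type u} [PseudoHoop A] (x y : A) : A := limp (rimp x y) y

/-- `x ∨₂ y = (x ⇝ y) → y`. -/
def join₂ {A : Type u} [PseudoHoop A] (x y : A) : A := rimp (limp x y) y

/-- Iterated implication: `x →⁰ y = y`, `x →ⁿ⁺¹ y = x → (x →ⁿ y)`. -/
def rimpPow {A : Type u} [PseudoHoop A] (x : A) : ℕ → A → A
  | 0, y => y
  | n + 1, y => rimp x (rimpPow x n y)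

/-- A filter of a pseudo-hoop. -/
structure IsFilter {A : Type u} [PseudoHoop A] (F : Set A) : Prop where
  nonempty : F.Nonempty
  mul_mem : ∀ {x y : A}, x ∈ F → y ∈ F → x * y ∈ F
  upward : ∀ {x y : A}, x ∈ F → ple x y → y ∈ F

/-- A normal filter: `x → y ∈ F` iff `x ⇝ y ∈ F`. -/
def IsNormalFilter {A : Type u} [PseudoHoop A] (F : Set A) : Prop :=
  IsFilter F ∧ ∀ x y : A, rimp x y ∈ F ↔ limp x y ∈ F

def IsProper {A : Type u} [PseudoHoop A] (F : Set A) : Prop := F ≠ Set.univ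

/-- A pseudo-hoop is simple if `{1}` is its unique proper filter. -/
def IsSimple (A : Type u) [PseudoHoop A] : Prop :=
  ∀ F : Set A, IsFilter F → IsProper F → F = {1}

/-- A pseudo-hoop is Wajsberg if `x ∨₁ y = y ∨₁ x` and `x ∨₂ y = y ∨₂ x`. -/
def IsWajsberg (A : Type u) [PseudoHoop A] : Prop :=
  ∀ x y : A, join₁ x y = join₁ y x ∧ join₂ x y = join₂ y x

/-- A fantastic filter. -/
def IsFantasticFilter {A : Type u} [PseudoHoop A] (F : Set A) : Prop :=
  IsFilter F ∧ ∀ x y : A,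
    (rimp y x ∈ F → rimp (join₁ x y) x ∈ F) ∧
    (limp y x ∈ F → limp (join₂ x y) x ∈ F)

def IS₂ {A : Type u} [PseudoHoop A] (μ : A → A) : Prop :=
  ∀ x y : A, μ (x * y) = μ x * μ (limp x (x * y)) ∧
    μ (x * y) = μ (rimp y (x * y)) * μ y

def IS₃ {A : Type u} [PseudoHoop A] (μ : A → A) : Prop :=
  ∀ x y : A, μ (μ x * μ y) = μ x * μ y

def IS₄ {A : Type u} [PseudoHoop A] (μ : A → A) : Prop :=
  ∀ x y : A, μ (rimp (μ x) (μ y)) = rimp (μ x) (μ y) ∧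
    μ (limp (μ x) (μ y)) = limp (μ x) (μ y)

/-- Type I state operator. -/
def IsStateI {A : Type u} [PseudoHoop A] (μ : A → A) : Prop :=
  (∀ x y : A, μ (rimp x y) = rimp (μ (join₁ x y)) (μ y) ∧
      μ (limp x y) = limp (μ (join₂ x y)) (μ y)) ∧ IS₂ μ ∧ IS₃ μ ∧ IS₄ μ

/-- Type II state operator. -/
def IsStateII {A : Type u} [PseudoHoop A] (μ : A → A) : Prop :=
  (∀ x y : A, μ (rimp x y) = rimp (μ (join₁ y x)) (μ y) ∧
      μ (limp x y) = limp (μ (join₂ y x)) (μ y)) ∧ IS₂ μ ∧ IS₃ μ ∧ IS₄ μ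

/-- Type III state operator. -/
def IsStateIII {A : Type u} [PseudoHoop A] (μ : A → A) : Prop :=
  (∀ x y : A, μ (rimp x y) = rimp (μ x) (μ (meet x y)) ∧
      μ (limp x y) = limp (μ x) (μ (meet x y))) ∧ IS₂ μ ∧ IS₃ μ ∧ IS₄ μ

end PseudoHoop

open PseudoHoop

/-- A bounded pseudo-hoop: a pseudo-hoop with a least element `0`. -/
class BoundedPseudoHoop (A : Type u) extends PseudoHoop A, Zero A where
  zero_le : ∀ x : A, rimp 0 x = 1

namespace BoundedPseudoHoop

/-- `x⁻ = x → 0`. -/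
def negr {A : Type u} [BoundedPseudoHoop A] (x : A) : A := rimp x 0

/-- `x∼ = x ⇝ 0`. -/
def negl {A : Type u} [BoundedPseudoHoop A] (x : A) : A := limp x 0

/-- A bounded pseudo-hoop is good if `x⁻∼ = x∼⁻` for all `x`. -/
def IsGood (A : Type u) [BoundedPseudoHoop A] : Prop :=
  ∀ x : A, negl (negr x) = negr (negl x)

/-- A bounded pseudo-hoop is involutive if `x⁻∼ = x∼⁻ = x` for all `x`. -/
def IsInvolutive (A : Type u) [BoundedPseudoHoop A] : Prop :=
  ∀ x : A, negl (negr x) = x ∧ negr (negl x) = x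

/-- The set of dense elements. -/
def Den (A : Type u) [BoundedPseudoHoop A] : Set A :=
  {x : A | negl (negr x) = 1}

/-- An involutive filter: `x⁻∼ → x ∈ F` and `x∼⁻ ⇝ x ∈ F` for all `x`. -/
def IsInvolutiveFilter {A : Type u} [BoundedPseudoHoop A] (F : Set A) : Prop :=
  IsFilter F ∧ ∀ x : A, rimp (negl (negr x)) x ∈ F ∧ limp (negr (negl x)) x ∈ F

end BoundedPseudoHoop

open BoundedPseudoHoop

/-!
The order laws of a pseudo-hoop all come from residuation, `x ≤ a → y ↔ x ⊙ a ≤ y` and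
`x ≤ a ⇝ y ↔ a ⊙ x ≤ y`, and each law for `⇝` is the corresponding law for `→` in the
opposite pseudo-hoop `Aᵐᵒᵖ`. For `x ≤ y`, axiom (IS₂) applied to `x = (y → x) ⊙ y` makes `μ`
monotone, which gives the kernel filter; in each of the three types the first axiom then bounds
`μ (x → y)` by `μ x → μ y`, and at `x = y = 1` it yields `μ 1 = 1`, which with (IS₃) makes `μ`
idempotent.
-/

theorem Set.range_eq_setOf_apply_eq_self {α : Type*} {f : α → α} (hf : ∀ x, f (f x) = f x) :
    Set.range f = {x | f x = x} :=
  Set.Subset.antisymm (Set.range_subset_iff.2 hf) fun x hx => ⟨x, hx⟩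

namespace PseudoHoop

open MulOpposite

variable {A : Type u} [PseudoHoop A]

instance : PseudoHoop Aᵐᵒᵖ where
  rimp x y := op (limp (unop x) (unop y))
  limp x y := op (rimp (unop x) (unop y))
  mul_one' x := unop_injective (one_mul' (unop x))
  one_mul' x := unop_injective (mul_one' (unop x))
  rimp_self x := unop_injective (limp_self (unop x))
  limp_self x := unop_injective (rimp_self (unop x))
  mul_rimp x y z := unop_injective (mul_limp (unop y) (unop x) (unop z))
  mul_limp x y z := unop_injective (mul_rimp (unop y) (unop x) (unop z))
  div₁ x y := unop_injective (div₃ (unop x) (unop y))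
  div₂ x y := unop_injective (div₂ (unop x) (unop y)).symm
  div₃ x y := unop_injective (div₁ (unop x) (unop y))

theorem one_rimp_rimp (a b : A) : rimp 1 (rimp a b) = rimp a b := by
  rw [← mul_rimp, one_mul']

theorem rimp_rimp_one (a b : A) : rimp (rimp a b) 1 = 1 := by
  have h : rimp (rimp a b) 1 * rimp a b = rimp a b := by
    rw [div₁, mul_one', one_rimp_rimp]
  have h' := mul_rimp (rimp (rimp a b) 1) (rimp a b) 1
  rwa [h, rimp_self] at h'

theorem limp_limp_one (a b : A) : limp (limp a b) 1 = 1 :=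
  congrArg unop (rimp_rimp_one (op a) (op b))

theorem one_rimp (x : A) : rimp 1 x = x := by
  have h₁ : rimp x (rimp 1 x) = 1 := by rw [← mul_rimp, mul_one', rimp_self]
  have h₂ : rimp (rimp 1 x) x = 1 := by
    rw [← mul_one' (rimp 1 x), ← div₁, mul_rimp, rimp_self, rimp_rimp_one]
  simpa only [h₁, h₂, one_mul'] using (div₁ x (rimp 1 x)).symm

theorem one_limp (x : A) : limp 1 x = x := congrArg unop (one_rimp (op x))

theorem rimp_one (x : A) : rimp x 1 = 1 := by
  simpa only [one_rimp] using rimp_rimp_one 1 x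

theorem ple_refl (x : A) : ple x x := rimp_self x

theorem ple_one (x : A) : ple x 1 := rimp_one x

theorem rimp_mul_eq_of_ple {x y : A} (h : ple x y) : rimp y x * y = x := by
  rw [← div₁, h, one_mul']

theorem ple_antisymm {x y : A} (hxy : ple x y) (hyx : ple y x) : x = y := by
  rw [← rimp_mul_eq_of_ple hxy, hyx, one_mul']

theorem eq_one_of_one_ple {x : A} (h : ple 1 x) : x = 1 := ple_antisymm (ple_one x) h

theorem ple_rimp_iff {x a y : A} : ple x (rimp a y) ↔ ple (x * a) y := by
  rw [ple, ple, mul_rimp]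

theorem mul_ple_right (x y : A) : ple (x * y) y := by
  rw [ple, mul_rimp, rimp_self, rimp_one]

theorem rimp_mul_ple (x y : A) : ple (rimp x y * x) y := ple_rimp_iff.1 (ple_refl _)

theorem ple_trans {x y z : A} (hxy : ple x y) (hyz : ple y z) : ple x z := by
  rw [← rimp_mul_eq_of_ple hxy, ple, mul_rimp, hyz, rimp_rimp_one]

theorem mul_ple_mul_right {x y : A} (w : A) (h : ple x y) : ple (x * w) (y * w) :=
  ple_rimp_iff.1 (ple_trans h (ple_rimp_iff.2 (ple_refl _)))

theorem rimp_ple_rimp_right {a b : A} (x : A) (h : ple a b) : ple (rimp x a) (rimp x b) :=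
  ple_rimp_iff.2 (ple_trans (rimp_mul_ple x a) h)

theorem limp_eq_one_of_ple {x y : A} (h : ple x y) : limp x y = 1 := by
  have hx : y * limp y x = x := by rw [← div₂, rimp_mul_eq_of_ple h]
  rw [← hx, mul_limp, limp_self, limp_limp_one]

theorem limp_eq_one_iff {x y : A} : limp x y = 1 ↔ ple x y :=
  ⟨fun h => congrArg unop (limp_eq_one_of_ple (x := op x) (y := op y) (congrArg op h)),
    limp_eq_one_of_ple⟩

theorem ple_op_iff {x y : A} : ple (op x) (op y) ↔ ple x y :=
  (op_eq_one_iff _).trans limp_eq_one_iff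

theorem ple_limp_iff {x a y : A} : ple x (limp a y) ↔ ple (a * x) y :=
  ple_op_iff.symm.trans ((ple_rimp_iff (x := op x) (a := op a) (y := op y)).trans ple_op_iff)

theorem mul_ple_left (x y : A) : ple (x * y) x :=
  ple_op_iff.1 (mul_ple_right (op y) (op x))

theorem mul_limp_ple (x y : A) : ple (x * limp x y) y :=
  ple_op_iff.1 (rimp_mul_ple (op x) (op y))

theorem mul_ple_mul_left {x y : A} (w : A) (h : ple x y) : ple (w * x) (w * y) :=
  ple_op_iff.1 (mul_ple_mul_right (op w) (ple_op_iff.2 h))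

theorem limp_ple_limp_right {a b : A} (x : A) (h : ple a b) : ple (limp x a) (limp x b) :=
  ple_op_iff.1 (rimp_ple_rimp_right (op x) (ple_op_iff.2 h))

theorem rimp_ple_rimp_left {x y : A} (z : A) (h : ple x y) : ple (rimp y z) (rimp x z) :=
  ple_rimp_iff.2 (ple_trans (mul_ple_mul_left _ h) (rimp_mul_ple y z))

theorem limp_ple_limp_left {x y : A} (z : A) (h : ple x y) : ple (limp y z) (limp x z) :=
  ple_op_iff.1 (rimp_ple_rimp_left (op z) (ple_op_iff.2 h))

theorem ple_join₁ (x y : A) : ple x (join₁ x y) := ple_limp_iff.2 (rimp_mul_ple x y)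

theorem ple_join₂ (x y : A) : ple x (join₂ x y) := ple_rimp_iff.2 (mul_limp_ple x y)

theorem ple_join₁_left (x y : A) : ple x (join₁ y x) := ple_limp_iff.2 (mul_ple_right _ x)

theorem ple_join₂_left (x y : A) : ple x (join₂ y x) := ple_rimp_iff.2 (mul_ple_left x _)

theorem meet_ple_right (x y : A) : ple (meet x y) y := rimp_mul_ple x y

theorem join₁_self (x : A) : join₁ x x = x := by rw [join₁, rimp_self, one_limp]

theorem meet_self (x : A) : meet x x = x := by rw [meet, rimp_self, one_mul']

section StateOperator

variable {μ : A → A}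

theorem IS₂.map_ple (hμ : IS₂ μ) {x y : A} (h : ple x y) : ple (μ x) (μ y) := by
  rw [← rimp_mul_eq_of_ple h, (hμ _ y).2]
  exact mul_ple_right _ _

theorem IS₃.map_map (hμ : IS₃ μ) (h₁ : μ 1 = 1) (x : A) : μ (μ x) = μ x := by
  simpa only [h₁, mul_one'] using hμ x 1

theorem IS₂.isFilter_ker (hμ : IS₂ μ) (h₁ : μ 1 = 1) : IsFilter {x : A | μ x = 1} where
  nonempty := ⟨1, h₁⟩
  mul_mem {x y} hx hy := by
    have hxy : μ (rimp y (x * y)) = 1 :=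
      eq_one_of_one_ple (hx ▸ hμ.map_ple (ple_rimp_iff.2 (ple_refl _)))
    show μ (x * y) = 1
    rw [(hμ x y).2, hxy, hy, one_mul']
  upward {x y} hx h := eq_one_of_one_ple (hx ▸ hμ.map_ple h)

theorem setOf_map_eq_one_inter_range (h₁ : μ 1 = 1) (hμ : ∀ x, μ (μ x) = μ x) :
    {x : A | μ x = 1} ∩ Set.range μ = {1} := by
  refine Set.Subset.antisymm ?_ (Set.singleton_subset_iff.2 ⟨h₁, 1, h₁⟩)
  rintro _ ⟨hx, x, rfl⟩
  exact (hμ x).symm.trans hx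

theorem IsStateI.map_one (hμ : IsStateI μ) : μ 1 = 1 := by
  simpa only [rimp_self, join₁_self] using (hμ.1 1 1).1

theorem IsStateII.map_one (hμ : IsStateII μ) : μ 1 = 1 := by
  simpa only [rimp_self, join₁_self] using (hμ.1 1 1).1

theorem IsStateIII.map_one (hμ : IsStateIII μ) : μ 1 = 1 := by
  simpa only [rimp_self, meet_self] using (hμ.1 1 1).1

theorem IsStateI.map_imp_ple (hμ : IsStateI μ) (x y : A) :
    ple (μ (rimp x y)) (rimp (μ x) (μ y)) ∧ ple (μ (limp x y)) (limp (μ x) (μ y)) := by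
  rw [(hμ.1 x y).1, (hμ.1 x y).2]
  exact ⟨rimp_ple_rimp_left _ (hμ.2.1.map_ple (ple_join₁ x y)),
    limp_ple_limp_left _ (hμ.2.1.map_ple (ple_join₂ x y))⟩

theorem IsStateII.map_imp_ple (hμ : IsStateII μ) (x y : A) :
    ple (μ (rimp x y)) (rimp (μ x) (μ y)) ∧ ple (μ (limp x y)) (limp (μ x) (μ y)) := by
  rw [(hμ.1 x y).1, (hμ.1 x y).2]
  exact ⟨rimp_ple_rimp_left _ (hμ.2.1.map_ple (ple_join₁_left x y)),
    limp_ple_limp_left _ (hμ.2.1.map_ple (ple_join₂_left x y))⟩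

theorem IsStateIII.map_imp_ple (hμ : IsStateIII μ) (x y : A) :
    ple (μ (rimp x y)) (rimp (μ x) (μ y)) ∧ ple (μ (limp x y)) (limp (μ x) (μ y)) := by
  rw [(hμ.1 x y).1, (hμ.1 x y).2]
  exact ⟨rimp_ple_rimp_right _ (hμ.2.1.map_ple (meet_ple_right x y)),
    limp_ple_limp_right _ (hμ.2.1.map_ple (meet_ple_right x y))⟩

end StateOperator

end PseudoHoop

theorem stmt18 {A : Type u} [PseudoHoop A] (μ : A → A)
    (h : IsStateI μ ∨ IsStateII μ ∨ IsStateIII μ) :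
    μ 1 = 1 ∧
    (∀ x y : A, ple x y → ple (μ x) (μ y)) ∧
    (∀ x : A, μ (μ x) = μ x) ∧
    (∀ x y : A, ple (μ (rimp x y)) (rimp (μ x) (μ y)) ∧
      ple (μ (limp x y)) (limp (μ x) (μ y))) ∧
    IsFilter {x : A | μ x = 1} ∧
    Set.range μ = {x : A | μ x = x} ∧
    {x : A | μ x = 1} ∩ Set.range μ = {1} := by
  obtain ⟨hIS₂, hIS₃, h₁, himp⟩ : IS₂ μ ∧ IS₃ μ ∧ μ 1 = 1 ∧ ∀ x y : A,
      ple (μ (rimp x y)) (rimp (μ x) (μ y)) ∧ ple (μ (limp x y)) (limp (μ x) (μ y)) := by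
    rcases h with hμ | hμ | hμ
    exacts [⟨hμ.2.1, hμ.2.2.1, hμ.map_one, hμ.map_imp_ple⟩,
      ⟨hμ.2.1, hμ.2.2.1, hμ.map_one, hμ.map_imp_ple⟩,
      ⟨hμ.2.1, hμ.2.2.1, hμ.map_one, hμ.map_imp_ple⟩]
  have hidem := hIS₃.map_map h₁
  exact ⟨h₁, fun _ _ => hIS₂.map_ple, hidem, himp, hIS₂.isFilter_ker h₁,
    Set.range_eq_setOf_apply_eq_self hidem, setOf_map_eq_one_inter_range h₁ hidem⟩
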